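/- Let E/F be a quadratic extension of non-archimedean local fields of characteristic zero. If the conductor f(E/F) of the extension (the valuation of the different) is odd, then there exists a uniformizer of E of trace zero; if f(E/F) is even, then there exists a unit of O_E of trace zero. -/

import Mathlib

/-!
Write `T z = z + σ z`. The elements `x σ x` are fixed of every even valuation, so it suffices to
find a trace-zero `Δ` with `v Δ ≡ f (mod 2)`. If some fixed element has odd valuation, multiplying
a trace-zero element by it flips the parity. Otherwise fixed elements have even valuation and all
trace-zero elements have the valuation parity of one of them, `Δ`. If `v Δ ≢ f`, take `z` with
`v z ≥ -f - 1` and `T z` not integral, and `ρ` with `v ρ = v Δ + 1`; then `w = (T z / T ρ) ρ` has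
`T w = T z` and `v w ≢ v Δ`. As `z - w` has trace zero, `v z ≤ v w`, and parity forces `v w ≥ -f`,
so `T w = T z` is integral after all.
-/

namespace TraceZero

section Valuation

variable {K : Type*} [Field K] {v : K → ℤ}

theorem val_one (hmul : ∀ x y : K, x ≠ 0 → y ≠ 0 → v (x * y) = v x + v y) : v 1 = 0 := by
  have := hmul 1 1 one_ne_zero one_ne_zero
  rw [mul_one] at this
  omega

theorem val_div (hmul : ∀ x y : K, x ≠ 0 → y ≠ 0 → v (x * y) = v x + v y) {x y : K}
    (hx : x ≠ 0) (hy : y ≠ 0) : v (x / y) = v x - v y := by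
  have := hmul (x / y) y (div_ne_zero hx hy) hy
  rw [div_mul_cancel₀ x hy] at this
  omega

theorem val_neg (hmul : ∀ x y : K, x ≠ 0 → y ≠ 0 → v (x * y) = v x + v y) (x : K) :
    v (-x) = v x := by
  rcases eq_or_ne x 0 with rfl | hx
  · rw [neg_zero]
  have h := hmul (-1) (-1) (by norm_num) (by norm_num)
  rw [neg_one_mul, neg_neg, val_one hmul] at h
  rw [← neg_one_mul, hmul _ _ (by norm_num) hx]
  omega

theorem add_ne_zero_and_val_add_eq_of_lt
    (hmul : ∀ x y : K, x ≠ 0 → y ≠ 0 → v (x * y) = v x + v y)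
    (hadd : ∀ x y : K, x ≠ 0 → y ≠ 0 → x + y ≠ 0 → min (v x) (v y) ≤ v (x + y))
    {x y : K} (hx : x ≠ 0) (hy : y ≠ 0) (hlt : v x < v y) : x + y ≠ 0 ∧ v (x + y) = v x := by
  have hxy : x + y ≠ 0 := by
    intro h
    rw [eq_neg_of_add_eq_zero_right h, val_neg hmul] at hlt
    exact hlt.false
  have hle := hadd x y hx hy hxy
  have hge := hadd (x + y) (-y) hxy (neg_ne_zero.2 hy) (by rwa [add_neg_cancel_right])
  rw [add_neg_cancel_right, val_neg hmul] at hge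
  exact ⟨hxy, by omega⟩

end Valuation

section Involution

variable {E : Type*} [Field E] {v : E → ℤ} {σ : E ≃+* E}

theorem map_add_map_self (hσ2 : ∀ x, σ (σ x) = x) (z : E) : σ (z + σ z) = z + σ z := by
  rw [map_add, hσ2, add_comm]

theorem map_div_of_antifixed {a b : E} (ha : σ a = -a) (hb : σ b = -b) : σ (a / b) = a / b := by
  rw [map_div₀, ha, hb, neg_div_neg_eq]

theorem exists_fixed_val_eq_two_mul
    (hmul : ∀ x y : E, x ≠ 0 → y ≠ 0 → v (x * y) = v x + v y)
    (hsurj : ∀ n : ℤ, ∃ x : E, x ≠ 0 ∧ v x = n)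
    (hσ2 : ∀ x, σ (σ x) = x) (hσv : ∀ x, v (σ x) = v x) (m : ℤ) :
    ∃ g : E, g ≠ 0 ∧ σ g = g ∧ v g = 2 * m := by
  obtain ⟨x, hx, rfl⟩ := hsurj m
  have hσx : σ x ≠ 0 := (map_ne_zero σ).2 hx
  refine ⟨x * σ x, mul_ne_zero hx hσx, by rw [map_mul, hσ2, mul_comm], ?_⟩
  rw [hmul x _ hx hσx, hσv]
  ring

theorem exists_antifixed_val_eq_of_even_sub
    (hmul : ∀ x y : E, x ≠ 0 → y ≠ 0 → v (x * y) = v x + v y)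
    (hsurj : ∀ n : ℤ, ∃ x : E, x ≠ 0 ∧ v x = n)
    (hσ2 : ∀ x, σ (σ x) = x) (hσv : ∀ x, v (σ x) = v x)
    {Δ : E} (hΔ : Δ ≠ 0) (hσΔ : σ Δ = -Δ) {n : ℤ} (hpar : Even (v Δ - n)) :
    ∃ Δ' : E, Δ' ≠ 0 ∧ σ Δ' = -Δ' ∧ v Δ' = n := by
  obtain ⟨k, hk⟩ := hpar
  obtain ⟨g, hg, hσg, hvg⟩ := exists_fixed_val_eq_two_mul hmul hsurj hσ2 hσv (-k)
  refine ⟨Δ * g, mul_ne_zero hΔ hg, by rw [map_mul, hσΔ, hσg, neg_mul], ?_⟩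
  rw [hmul Δ g hΔ hg, hvg]
  omega

theorem val_le_of_trace_eq
    (hmul : ∀ x y : E, x ≠ 0 → y ≠ 0 → v (x * y) = v x + v y)
    (hadd : ∀ x y : E, x ≠ 0 → y ≠ 0 → x + y ≠ 0 → min (v x) (v y) ≤ v (x + y))
    {z w : E} (hz : z ≠ 0) (hw : w ≠ 0) (htr : z + σ z = w + σ w)
    (hval : ∀ b : E, b ≠ 0 → σ b = -b → v b ≠ v w) : v z ≤ v w := by
  by_contra! hlt
  obtain ⟨hne, hv⟩ := add_ne_zero_and_val_add_eq_of_lt hmul hadd (neg_ne_zero.2 hw) hz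
    (by rwa [val_neg hmul])
  refine hval (-w + z) hne ?_ (by rw [hv, val_neg hmul])
  rw [map_add, map_neg]
  linear_combination htr

/-- `x` lies in the inverse different: `Tr (x 𝒪_E) ⊆ 𝒪_F`. -/
def TraceIntegral (v : E → ℤ) (σ : E ≃+* E) (x : E) : Prop :=
  ∀ y : E, y ≠ 0 → 0 ≤ v y → (x * y + σ (x * y) = 0 ∨ 0 ≤ v (x * y + σ (x * y)))

variable {f : ℤ}

theorem trace_integral_of_le (hmul : ∀ x y : E, x ≠ 0 → y ≠ 0 → v (x * y) = v x + v y)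
    (hf : ∀ x : E, x ≠ 0 → (TraceIntegral v σ x ↔ -f ≤ v x))
    {z : E} (hz : z ≠ 0) (hvz : -f ≤ v z) : z + σ z = 0 ∨ 0 ≤ v (z + σ z) := by
  simpa using (hf z hz).2 hvz 1 one_ne_zero (val_one hmul).ge

theorem exists_trace_not_integral (hmul : ∀ x y : E, x ≠ 0 → y ≠ 0 → v (x * y) = v x + v y)
    (hsurj : ∀ n : ℤ, ∃ x : E, x ≠ 0 ∧ v x = n)
    (hf : ∀ x : E, x ≠ 0 → (TraceIntegral v σ x ↔ -f ≤ v x)) :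
    ∃ z : E, z ≠ 0 ∧ -f - 1 ≤ v z ∧ z + σ z ≠ 0 ∧ v (z + σ z) < 0 := by
  obtain ⟨x, hx, hvx⟩ := hsurj (-f - 1)
  have hnot : ¬ TraceIntegral v σ x := fun h => by linarith [(hf x hx).1 h]
  simp only [TraceIntegral, not_forall, not_or, not_le] at hnot
  obtain ⟨y, hy, hvy, hne, hneg⟩ := hnot
  exact ⟨x * y, mul_ne_zero hx hy, by rw [hmul x y hx hy]; omega, hne, hneg⟩

theorem even_val_sub_of_forall_fixed_even
    (hmul : ∀ x y : E, x ≠ 0 → y ≠ 0 → v (x * y) = v x + v y)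
    (hadd : ∀ x y : E, x ≠ 0 → y ≠ 0 → x + y ≠ 0 → min (v x) (v y) ≤ v (x + y))
    (hsurj : ∀ n : ℤ, ∃ x : E, x ≠ 0 ∧ v x = n) (hσ2 : ∀ x, σ (σ x) = x)
    (hf : ∀ x : E, x ≠ 0 → (TraceIntegral v σ x ↔ -f ≤ v x))
    (hfix : ∀ g : E, g ≠ 0 → σ g = g → Even (v g))
    {Δ : E} (hΔ : Δ ≠ 0) (hσΔ : σ Δ = -Δ) : Even (v Δ - f) := by
  have hanti : ∀ b : E, b ≠ 0 → σ b = -b → Even (v b - v Δ) := fun b hb hσb => by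
    simpa only [val_div hmul hb hΔ] using
      hfix _ (div_ne_zero hb hΔ) (map_div_of_antifixed hσb hσΔ)
  by_contra hodd
  obtain ⟨z, hz, hvz, hTz, hvTz⟩ := exists_trace_not_integral hmul hsurj hf
  obtain ⟨ρ, hρ, hvρ⟩ := hsurj (v Δ + 1)
  have hTρ : ρ + σ ρ ≠ 0 := fun h => by
    simpa [hvρ, parity_simps] using hanti ρ hρ (eq_neg_of_add_eq_zero_right h)
  set c := (z + σ z) / (ρ + σ ρ)
  have hc : c ≠ 0 := div_ne_zero hTz hTρ
  have hσc : σ c = c := by rw [map_div₀, map_add_map_self hσ2, map_add_map_self hσ2]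
  have hTw : c * ρ + σ (c * ρ) = z + σ z := by
    rw [map_mul, hσc, ← mul_add, div_mul_cancel₀ _ hTρ]
  have hw : c * ρ ≠ 0 := mul_ne_zero hc hρ
  have hvw : Odd (v (c * ρ) - v Δ) := by
    rw [hmul c ρ hc hρ, hvρ, show v c + (v Δ + 1) - v Δ = v c + 1 by ring]
    exact (hfix c hc hσc).add_one
  have hle : v z ≤ v (c * ρ) := val_le_of_trace_eq hmul hadd hz hw hTw.symm
    fun b hb hσb hvb => Int.not_even_iff_odd.2 hvw (hvb ▸ hanti b hb hσb)
  have hge : -f ≤ v (c * ρ) := by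
    obtain ⟨k, hk⟩ := hvw
    obtain ⟨l, hl⟩ := Int.not_even_iff_odd.1 hodd
    omega
  rcases trace_integral_of_le hmul hf hw hge with h | h <;> rw [hTw] at h
  · exact hTz h
  · omega

theorem exists_antifixed_ne_zero (hσ2 : ∀ x, σ (σ x) = x) (hσne : ∃ x, σ x ≠ x) :
    ∃ Δ : E, Δ ≠ 0 ∧ σ Δ = -Δ := by
  obtain ⟨x, hx⟩ := hσne
  exact ⟨x - σ x, sub_ne_zero.2 hx.symm, by rw [map_sub, hσ2, neg_sub]⟩

theorem exists_antifixed_even_val_sub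
    (hmul : ∀ x y : E, x ≠ 0 → y ≠ 0 → v (x * y) = v x + v y)
    (hadd : ∀ x y : E, x ≠ 0 → y ≠ 0 → x + y ≠ 0 → min (v x) (v y) ≤ v (x + y))
    (hsurj : ∀ n : ℤ, ∃ x : E, x ≠ 0 ∧ v x = n) (hσ2 : ∀ x, σ (σ x) = x)
    (hσne : ∃ x, σ x ≠ x) (hf : ∀ x : E, x ≠ 0 → (TraceIntegral v σ x ↔ -f ≤ v x)) :
    ∃ Δ : E, Δ ≠ 0 ∧ σ Δ = -Δ ∧ Even (v Δ - f) := by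
  obtain ⟨Δ, hΔ, hσΔ⟩ := exists_antifixed_ne_zero hσ2 hσne
  by_cases hfix : ∀ g : E, g ≠ 0 → σ g = g → Even (v g)
  · exact ⟨Δ, hΔ, hσΔ, even_val_sub_of_forall_fixed_even hmul hadd hsurj hσ2 hf hfix hΔ hσΔ⟩
  push Not at hfix
  obtain ⟨g, hg, hσg, hodd⟩ := hfix
  by_cases hpar : Even (v Δ - f)
  · exact ⟨Δ, hΔ, hσΔ, hpar⟩
  refine ⟨Δ * g, mul_ne_zero hΔ hg, by rw [map_mul, hσΔ, hσg, neg_mul], ?_⟩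
  rw [hmul Δ g hΔ hg, show v Δ + v g - f = v Δ - f + v g by ring]
  exact (Int.not_even_iff_odd.1 hpar).add_odd (Int.not_even_iff_odd.1 hodd)

end Involution

end TraceZero

theorem exists_traceZero_uniformizer_or_unit_general
    (E : Type*) [Field E]
    (v : E → ℤ)
    (hmul : ∀ x y : E, x ≠ 0 → y ≠ 0 → v (x * y) = v x + v y)
    (hadd : ∀ x y : E, x ≠ 0 → y ≠ 0 → x + y ≠ 0 → min (v x) (v y) ≤ v (x + y))
    (hsurj : ∀ n : ℤ, ∃ x : E, x ≠ 0 ∧ v x = n)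
    (σ : E ≃+* E) (hσ2 : ∀ x, σ (σ x) = x) (hσne : ∃ x, σ x ≠ x)
    (hσv : ∀ x, v (σ x) = v x)
    (f : ℤ)
    (hf : ∀ x : E, x ≠ 0 →
      ((∀ y : E, y ≠ 0 → 0 ≤ v y →
          (x * y + σ (x * y) = 0 ∨ 0 ≤ v (x * y + σ (x * y)))) ↔ -f ≤ v x)) :
    (Odd f → ∃ Δ : E, Δ ≠ 0 ∧ v Δ = 1 ∧ Δ + σ Δ = 0) ∧
    (Even f → ∃ Δ : E, Δ ≠ 0 ∧ v Δ = 0 ∧ Δ + σ Δ = 0) := by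
  obtain ⟨Δ, hΔ, hσΔ, hpar⟩ :=
    TraceZero.exists_antifixed_even_val_sub hmul hadd hsurj hσ2 hσne hf
  have hexists (n : ℤ) (hn : Even (f - n)) : ∃ Δ' : E, Δ' ≠ 0 ∧ v Δ' = n ∧ Δ' + σ Δ' = 0 := by
    obtain ⟨Δ', hΔ', hσΔ', hvΔ'⟩ := TraceZero.exists_antifixed_val_eq_of_even_sub hmul hsurj hσ2
      hσv hΔ hσΔ (by simpa [sub_add_sub_cancel] using hpar.add hn)
    exact ⟨Δ', hΔ', hvΔ', by rw [hσΔ', add_neg_cancel]⟩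
  exact ⟨fun hodd => hexists 1 (hodd.sub_odd odd_one),
    fun heven => hexists 0 (by simpa using heven)⟩

/-- Let `E/F` be a quadratic extension of non-archimedean local fields of
characteristic zero, with non-trivial Galois involution `σ` and trace
`Tr(x) = x + σ x`.  Let `f = v_E(𝔡_{E/F})` be the valuation of the different,
characterized by the property that `x` lies in the inverse different (i.e.
`Tr(x·O_E) ⊆ O_F`) iff `v_E(x) ≥ -f`.  If `f` is odd there exists a uniformizer of
`E` (element of valuation `1`) of trace zero; if `f` is even there exists a unit of
`O_E` (element of valuation `0`) of trace zero. -/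
theorem exists_traceZero_uniformizer_or_unit
    (E : Type*) [Field E] [CharZero E]
    (v : E → ℤ)
    (hmul : ∀ x y : E, x ≠ 0 → y ≠ 0 → v (x * y) = v x + v y)
    (hadd : ∀ x y : E, x ≠ 0 → y ≠ 0 → x + y ≠ 0 → min (v x) (v y) ≤ v (x + y))
    (hsurj : ∀ n : ℤ, ∃ x : E, x ≠ 0 ∧ v x = n)
    (σ : E ≃+* E) (hσ2 : ∀ x, σ (σ x) = x) (hσne : ∃ x, σ x ≠ x)
    (hσv : ∀ x, v (σ x) = v x)
    (f : ℤ)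
    (hf : ∀ x : E, x ≠ 0 →
      ((∀ y : E, y ≠ 0 → 0 ≤ v y →
          (x * y + σ (x * y) = 0 ∨ 0 ≤ v (x * y + σ (x * y)))) ↔ -f ≤ v x)) :
    (Odd f → ∃ Δ : E, Δ ≠ 0 ∧ v Δ = 1 ∧ Δ + σ Δ = 0) ∧
    (Even f → ∃ Δ : E, Δ ≠ 0 ∧ v Δ = 0 ∧ Δ + σ Δ = 0) :=
  exists_traceZero_uniformizer_or_unit_general E v hmul hadd hsurj σ hσ2 hσne hσv f hf
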